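/- Equip P = k[x₁,x₂,x₃] with the Poisson bracket {x₁,x₂} = 0, {x₂,x₃} = 2x₁x₂, {x₃,x₁} = x₁². Then for an invertible matrix M = (a_{ij}): (i) φ_M is a graded Poisson automorphism of P if and only if M = [[a,0,0],[0,b,0],[c,d,a]] for some a, b ∈ k \ {0} and c, d ∈ k; (ii) φ_M is a Poisson reflection of P if and only if M = [[1,0,0],[0,ξ,0],[0,d,1]] for some root of unity ξ ≠ 1 and some d ∈ k. -/

import Mathlib

open MvPolynomial

/-- The bracket on `k[x₁,x₂,x₃]` determined by the values `p12 = {x₁,x₂}`, `p23 = {x₂,x₃}`,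
`p31 = {x₃,x₁}` via `{f,g} = Σ_{i<j} (∂f/∂xᵢ·∂g/∂xⱼ − ∂f/∂xⱼ·∂g/∂xᵢ)·{xᵢ,xⱼ}`. -/
noncomputable def jacBracket {k : Type*} [Field k] (p12 p23 p31 : MvPolynomial (Fin 3) k)
    (f g : MvPolynomial (Fin 3) k) : MvPolynomial (Fin 3) k :=
  (pderiv 0 f * pderiv 1 g - pderiv 1 f * pderiv 0 g) * p12 +
    (pderiv 1 f * pderiv 2 g - pderiv 2 f * pderiv 1 g) * p23 +
    (pderiv 2 f * pderiv 0 g - pderiv 0 f * pderiv 2 g) * p31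

/-- The graded algebra endomorphism `φ_M` of `k[x₁,x₂,x₃]` with `φ_M(xᵢ) = Σⱼ M i j · xⱼ`. -/
noncomputable def phiM {k : Type*} [Field k] (M : Matrix (Fin 3) (Fin 3) k) :
    MvPolynomial (Fin 3) k →ₐ[k] MvPolynomial (Fin 3) k :=
  aeval fun i => ∑ j, C (M i j) * X j

/-- `φ_M` is a graded Poisson automorphism (for invertible `M`) iff it preserves the bracket. -/
def IsPoissonAut {k : Type*} [Field k]
    (br : MvPolynomial (Fin 3) k → MvPolynomial (Fin 3) k → MvPolynomial (Fin 3) k)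
    (M : Matrix (Fin 3) (Fin 3) k) : Prop :=
  ∀ f g, phiM M (br f g) = br (phiM M f) (phiM M g)

/-- `φ_M` is a Poisson reflection: a graded Poisson automorphism of finite order whose
eigenvalues are `1, 1, ξ` for some root of unity `ξ ≠ 1`. -/
def IsPoissonReflection {k : Type*} [Field k]
    (br : MvPolynomial (Fin 3) k → MvPolynomial (Fin 3) k → MvPolynomial (Fin 3) k)
    (M : Matrix (Fin 3) (Fin 3) k) : Prop :=
  IsPoissonAut br M ∧ (∃ n, 0 < n ∧ M ^ n = 1) ∧
    ∃ ξ : k, ξ ≠ 1 ∧ (∃ m, 0 < m ∧ ξ ^ m = 1) ∧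
      M.charpoly = (Polynomial.X - 1) ^ 2 * (Polynomial.X - Polynomial.C ξ)

/-! The bracket is an antisymmetric biderivation, so `φ_M` preserves it as soon as it preserves
the three structure constants `{x₁,x₂}`, `{x₂,x₃}`, `{x₃,x₁}`. For the linear forms
`φ_M(xᵢ) = Σⱼ M i j · xⱼ` these are three quadratic identities; evaluating them at the standard
basis vectors forces the first row of `M` to be `(a,0,0)` with `a ≠ 0` (by `det M ≠ 0`), then
`M 1 2 = 0`, `M 2 2 = a` and `3a · M 1 0 = 0`, where characteristic zero enters.

For a reflection, the characteristic polynomial `(X - a)²(X - b)` of such a matrix equals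
`(X - 1)²(X - ξ)`, which forces `a = 1` and `b = ξ`; the `(3,1)` entry of `Mⁿ` is then `n · c`,
so finite order forces `c = 0`. -/

section Bracket

variable {k : Type*} [Field k] (p12 p23 p31 : MvPolynomial (Fin 3) k)

lemma jacBracket_C_left (a : k) (g : MvPolynomial (Fin 3) k) :
    jacBracket p12 p23 p31 (C a) g = 0 := by
  simp [jacBracket]

lemma jacBracket_C_right (f : MvPolynomial (Fin 3) k) (a : k) :
    jacBracket p12 p23 p31 f (C a) = 0 := by
  simp [jacBracket]

lemma jacBracket_add_left (f₁ f₂ g : MvPolynomial (Fin 3) k) :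
    jacBracket p12 p23 p31 (f₁ + f₂) g =
      jacBracket p12 p23 p31 f₁ g + jacBracket p12 p23 p31 f₂ g := by
  simp only [jacBracket, map_add]; ring

lemma jacBracket_add_right (f g₁ g₂ : MvPolynomial (Fin 3) k) :
    jacBracket p12 p23 p31 f (g₁ + g₂) =
      jacBracket p12 p23 p31 f g₁ + jacBracket p12 p23 p31 f g₂ := by
  simp only [jacBracket, map_add]; ring

lemma jacBracket_mul_left (f₁ f₂ g : MvPolynomial (Fin 3) k) :
    jacBracket p12 p23 p31 (f₁ * f₂) g =
      f₁ * jacBracket p12 p23 p31 f₂ g + f₂ * jacBracket p12 p23 p31 f₁ g := by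
  simp only [jacBracket, pderiv_mul]; ring

lemma jacBracket_mul_right (f g₁ g₂ : MvPolynomial (Fin 3) k) :
    jacBracket p12 p23 p31 f (g₁ * g₂) =
      g₁ * jacBracket p12 p23 p31 f g₂ + g₂ * jacBracket p12 p23 p31 f g₁ := by
  simp only [jacBracket, pderiv_mul]; ring

lemma jacBracket_self (f : MvPolynomial (Fin 3) k) : jacBracket p12 p23 p31 f f = 0 := by
  simp only [jacBracket]; ring

lemma jacBracket_swap (f g : MvPolynomial (Fin 3) k) :
    jacBracket p12 p23 p31 g f = -jacBracket p12 p23 p31 f g := by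
  simp only [jacBracket]; ring

lemma jacBracket_X_zero_X_one : jacBracket p12 p23 p31 (X 0) (X 1) = p12 := by
  simp [jacBracket, pderiv_X]

lemma jacBracket_X_one_X_two : jacBracket p12 p23 p31 (X 1) (X 2) = p23 := by
  simp [jacBracket, pderiv_X]

lemma jacBracket_X_two_X_zero : jacBracket p12 p23 p31 (X 2) (X 0) = p31 := by
  simp [jacBracket, pderiv_X]

lemma map_jacBracket_of_forall_X (φ : MvPolynomial (Fin 3) k →ₐ[k] MvPolynomial (Fin 3) k)
    (h : ∀ i j, φ (jacBracket p12 p23 p31 (X i) (X j)) =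
      jacBracket p12 p23 p31 (φ (X i)) (φ (X j)))
    (f g : MvPolynomial (Fin 3) k) :
    φ (jacBracket p12 p23 p31 f g) = jacBracket p12 p23 p31 (φ f) (φ g) := by
  have h_X_left (i : Fin 3) (g : MvPolynomial (Fin 3) k) :
      φ (jacBracket p12 p23 p31 (X i) g) = jacBracket p12 p23 p31 (φ (X i)) (φ g) := by
    induction g using MvPolynomial.induction_on with
    | C a => simp [jacBracket_C_right, ← algebraMap_eq]
    | add p q hp hq => simp [jacBracket_add_right, hp, hq]
    | mul_X p j hp => rw [jacBracket_mul_right, map_add, map_mul, map_mul, hp, h, map_mul,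
        jacBracket_mul_right]
  induction f using MvPolynomial.induction_on with
  | C a => simp [jacBracket_C_left, ← algebraMap_eq]
  | add p q hp hq => simp [jacBracket_add_left, hp, hq]
  | mul_X p j hp => rw [jacBracket_mul_left, map_add, map_mul, map_mul, hp, h_X_left, map_mul,
      jacBracket_mul_left]

lemma forall_map_jacBracket_iff (φ : MvPolynomial (Fin 3) k →ₐ[k] MvPolynomial (Fin 3) k) :
    (∀ f g, φ (jacBracket p12 p23 p31 f g) = jacBracket p12 p23 p31 (φ f) (φ g)) ↔
      φ p12 = jacBracket p12 p23 p31 (φ (X 0)) (φ (X 1)) ∧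
      φ p23 = jacBracket p12 p23 p31 (φ (X 1)) (φ (X 2)) ∧
      φ p31 = jacBracket p12 p23 p31 (φ (X 2)) (φ (X 0)) := by
  refine ⟨fun h => ⟨?_, ?_, ?_⟩, fun ⟨h01, h12, h20⟩ => map_jacBracket_of_forall_X _ _ _ φ ?_⟩
  · simpa only [jacBracket_X_zero_X_one] using h (X 0) (X 1)
  · simpa only [jacBracket_X_one_X_two] using h (X 1) (X 2)
  · simpa only [jacBracket_X_two_X_zero] using h (X 2) (X 0)
  have swap {f g} (hfg : φ (jacBracket p12 p23 p31 f g) = jacBracket p12 p23 p31 (φ f) (φ g)) :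
      φ (jacBracket p12 p23 p31 g f) = jacBracket p12 p23 p31 (φ g) (φ f) := by
    rw [jacBracket_swap, map_neg, hfg, ← jacBracket_swap]
  have h01' : φ (jacBracket p12 p23 p31 (X 0) (X 1)) =
      jacBracket p12 p23 p31 (φ (X 0)) (φ (X 1)) := by rwa [jacBracket_X_zero_X_one]
  have h12' : φ (jacBracket p12 p23 p31 (X 1) (X 2)) =
      jacBracket p12 p23 p31 (φ (X 1)) (φ (X 2)) := by rwa [jacBracket_X_one_X_two]
  have h20' : φ (jacBracket p12 p23 p31 (X 2) (X 0)) =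
      jacBracket p12 p23 p31 (φ (X 2)) (φ (X 0)) := by rwa [jacBracket_X_two_X_zero]
  intro i j
  match i, j with
  | 0, 0 | 1, 1 | 2, 2 => simp only [jacBracket_self, map_zero]
  | 0, 1 => exact h01'
  | 1, 2 => exact h12'
  | 2, 0 => exact h20'
  | 1, 0 => exact swap h01'
  | 2, 1 => exact swap h12'
  | 0, 2 => exact swap h20'

lemma pderiv_sum_C_mul_X (u : Fin 3 → k) (l : Fin 3) :
    pderiv l (∑ j, C (u j) * X j : MvPolynomial (Fin 3) k) = C (u l) := by
  simp [pderiv_X, Pi.single_apply]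

lemma jacBracket_sum_C_mul_X (u v : Fin 3 → k) :
    jacBracket p12 p23 p31 (∑ j, C (u j) * X j) (∑ j, C (v j) * X j) =
      C (u 0 * v 1 - u 1 * v 0) * p12 + C (u 1 * v 2 - u 2 * v 1) * p23 +
        C (u 2 * v 0 - u 0 * v 2) * p31 := by
  simp only [jacBracket, pderiv_sum_C_mul_X, map_sub, map_mul]

end Bracket

section Automorphisms

variable {k : Type*} [Field k]

lemma phiM_X (M : Matrix (Fin 3) (Fin 3) k) (i : Fin 3) :
    phiM M (X i) = ∑ j, C (M i j) * X j :=
  aeval_X _ _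

lemma isPoissonAut_jacBracket_iff (p12 p23 p31 : MvPolynomial (Fin 3) k)
    (M : Matrix (Fin 3) (Fin 3) k) :
    IsPoissonAut (jacBracket p12 p23 p31) M ↔
      phiM M p12 = C (M 0 0 * M 1 1 - M 0 1 * M 1 0) * p12 +
        C (M 0 1 * M 1 2 - M 0 2 * M 1 1) * p23 + C (M 0 2 * M 1 0 - M 0 0 * M 1 2) * p31 ∧
      phiM M p23 = C (M 1 0 * M 2 1 - M 1 1 * M 2 0) * p12 +
        C (M 1 1 * M 2 2 - M 1 2 * M 2 1) * p23 + C (M 1 2 * M 2 0 - M 1 0 * M 2 2) * p31 ∧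
      phiM M p31 = C (M 2 0 * M 0 1 - M 2 1 * M 0 0) * p12 +
        C (M 2 1 * M 0 2 - M 2 2 * M 0 1) * p23 + C (M 2 2 * M 0 0 - M 2 0 * M 0 2) * p31 := by
  simp only [IsPoissonAut, forall_map_jacBracket_iff, phiM_X, jacBracket_sum_C_mul_X]

lemma isPoissonAut_diag_lower (a b c d : k) :
    IsPoissonAut (jacBracket 0 (2 * X 0 * X 1) (X 0 ^ 2)) !![a, 0, 0; 0, b, 0; c, d, a] := by
  rw [isPoissonAut_jacBracket_iff]
  simp [phiM_X, Fin.sum_univ_three, map_ofNat]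
  constructor <;> ring

lemma exists_eq_diag_lower_of_isPoissonAut [CharZero k] (M : Matrix (Fin 3) (Fin 3) k)
    (hM : M.det ≠ 0) (H : IsPoissonAut (jacBracket 0 (2 * X 0 * X 1) (X 0 ^ 2)) M) :
    ∃ a b c d : k, a ≠ 0 ∧ b ≠ 0 ∧ M = !![a, 0, 0; 0, b, 0; c, d, a] := by
  obtain ⟨h12, h23, h31⟩ := (isPoissonAut_jacBracket_iff _ _ _ M).1 H
  simp only [map_zero, map_mul, map_pow, map_ofNat, phiM_X] at h12 h23 h31
  have m01 : M 0 1 = 0 := by simpa [Fin.sum_univ_three] using congrArg (eval ![0, 1, 0]) h31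
  have m02 : M 0 2 = 0 := by simpa [Fin.sum_univ_three] using congrArg (eval ![0, 0, 1]) h31
  have m00 : M 0 0 ≠ 0 := by
    intro h
    apply hM
    rw [Matrix.det_fin_three, h, m01, m02]
    ring
  have m12 : M 1 2 = 0 := by
    simpa [Fin.sum_univ_three, m02, m00] using congrArg (eval ![1, 0, 0]) h12
  have m22 : M 2 2 = M 0 0 := by
    have h : M 0 0 ^ 2 = M 2 2 * M 0 0 := by
      simpa [Fin.sum_univ_three, m02] using congrArg (eval ![1, 0, 0]) h31
    exact mul_right_cancel₀ m00 (by linear_combination h.symm)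
  have m10 : M 1 0 = 0 := by
    have h : 2 * M 0 0 * M 1 0 = -(M 1 0 * M 0 0) := by
      simpa [Fin.sum_univ_three, m12, m22] using congrArg (eval ![1, 0, 0]) h23
    have h3 : (3 * M 0 0) * M 1 0 = 0 := by linear_combination h
    exact (mul_eq_zero.1 h3).resolve_left (mul_ne_zero three_ne_zero m00)
  have m11 : M 1 1 ≠ 0 := by
    intro h
    apply hM
    rw [Matrix.det_fin_three, h, m01, m02, m12]
    ring
  refine ⟨M 0 0, M 1 1, M 2 0, M 2 1, m00, m11, (Matrix.eta_fin_three M).trans ?_⟩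
  rw [m01, m02, m10, m12, m22]

end Automorphisms

section Reflections

variable {k : Type*} [Field k]

lemma charpoly_diag_lower (a b c d : k) :
    (!![a, 0, 0; 0, b, 0; c, d, a] : Matrix (Fin 3) (Fin 3) k).charpoly =
      (Polynomial.X - Polynomial.C a) ^ 2 * (Polynomial.X - Polynomial.C b) := by
  rw [Matrix.charpoly, Matrix.det_fin_three]
  simp
  ring

lemma eq_one_and_eq_of_sq_mul_eq {a b ξ : k}
    (h : (Polynomial.X - Polynomial.C a) ^ 2 * (Polynomial.X - Polynomial.C b) =
      (Polynomial.X - 1) ^ 2 * (Polynomial.X - Polynomial.C ξ)) : a = 1 ∧ b = ξ := by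
  rw [← Polynomial.C_1] at h
  obtain rfl : 1 = a := by
    have h1 : 1 = a ∨ 1 = b := by
      simpa [sub_eq_zero] using congrArg (Polynomial.eval 1) h
    rcases h1 with ha | rfl
    · exact ha
    have h' : (Polynomial.X - Polynomial.C a) ^ 2 =
        (Polynomial.X - Polynomial.C 1) * (Polynomial.X - Polynomial.C ξ) :=
      mul_right_cancel₀ (Polynomial.X_sub_C_ne_zero 1) (by rw [h]; ring)
    simpa [sub_eq_zero] using congrArg (Polynomial.eval 1) h'
  have := mul_left_cancel₀ (pow_ne_zero 2 (Polynomial.X_sub_C_ne_zero 1)) h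
  exact ⟨rfl, Polynomial.C_injective (sub_right_injective this)⟩

lemma pow_diag_lower_one (x c d : k) (n : ℕ) :
    (!![1, 0, 0; 0, x, 0; c, d, 1] : Matrix (Fin 3) (Fin 3) k) ^ n =
      !![1, 0, 0; 0, x ^ n, 0; n * c, d * ∑ i ∈ Finset.range n, x ^ i, 1] := by
  induction n with
  | zero => simp [Matrix.one_fin_three]
  | succ n ih =>
    rw [pow_succ, ih, Matrix.mul_fin_three, pow_succ', geom_sum_succ]
    push_cast
    ring_nf

lemma isPoissonReflection_iff [CharZero k] (M : Matrix (Fin 3) (Fin 3) k) (hM : M.det ≠ 0) :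
    IsPoissonReflection (jacBracket 0 (2 * X 0 * X 1) (X 0 ^ 2)) M ↔
      ∃ ξ d : k, ξ ≠ 1 ∧ (∃ m, 0 < m ∧ ξ ^ m = 1) ∧ M = !![1, 0, 0; 0, ξ, 0; 0, d, 1] := by
  constructor
  · rintro ⟨H, ⟨n, hn, hMn⟩, ξ, hξ1, hξ, hcharpoly⟩
    obtain ⟨a, b, c, d, -, -, rfl⟩ := exists_eq_diag_lower_of_isPoissonAut M hM H
    rw [charpoly_diag_lower] at hcharpoly
    obtain ⟨rfl, rfl⟩ := eq_one_and_eq_of_sq_mul_eq hcharpoly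
    have hc : (n : k) * c = 0 := by
      simpa [pow_diag_lower_one] using congrFun (congrFun hMn 2) 0
    obtain rfl : c = 0 := (mul_eq_zero.1 hc).resolve_left (Nat.cast_ne_zero.2 hn.ne')
    exact ⟨b, d, hξ1, hξ, rfl⟩
  · rintro ⟨ξ, d, hξ1, ⟨m, hm, hξm⟩, rfl⟩
    refine ⟨isPoissonAut_diag_lower 1 ξ 0 d, ⟨m, hm, ?_⟩, ξ, hξ1, ⟨m, hm, hξm⟩, ?_⟩
    · have hgeom : ∑ i ∈ Finset.range m, ξ ^ i = 0 := by
        rw [geom_sum_eq hξ1, hξm, sub_self, zero_div]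
      rw [pow_diag_lower_one, hξm, hgeom, Matrix.one_fin_three]
      simp
    · rw [charpoly_diag_lower, map_one]

end Reflections

theorem stmt_4_general {k : Type*} [Field k] [CharZero k]
    (M : Matrix (Fin 3) (Fin 3) k) (hM : IsUnit M.det) :
    (IsPoissonAut (jacBracket 0 (2 * X 0 * X 1) (X 0 ^ 2)) M ↔
      ∃ a b c d : k, a ≠ 0 ∧ b ≠ 0 ∧ M = !![a, 0, 0; 0, b, 0; c, d, a]) ∧
    (IsPoissonReflection (jacBracket 0 (2 * X 0 * X 1) (X 0 ^ 2)) M ↔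
      ∃ ξ d : k, ξ ≠ 1 ∧ (∃ m, 0 < m ∧ ξ ^ m = 1) ∧ M = !![1, 0, 0; 0, ξ, 0; 0, d, 1]) := by
  refine ⟨⟨exists_eq_diag_lower_of_isPoissonAut M hM.ne_zero, ?_⟩,
    isPoissonReflection_iff M hM.ne_zero⟩
  rintro ⟨a, b, c, d, -, -, rfl⟩
  exact isPoissonAut_diag_lower a b c d

/-- Case `{x₁,x₂} = 0`, `{x₂,x₃} = 2x₁x₂`, `{x₃,x₁} = x₁²`. -/
theorem stmt_4 {k : Type*} [Field k] [IsAlgClosed k] [CharZero k]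
    (M : Matrix (Fin 3) (Fin 3) k) (hM : IsUnit M.det) :
    (IsPoissonAut (jacBracket 0 (2 * X 0 * X 1) (X 0 ^ 2)) M ↔
      ∃ a b c d : k, a ≠ 0 ∧ b ≠ 0 ∧ M = !![a, 0, 0; 0, b, 0; c, d, a]) ∧
    (IsPoissonReflection (jacBracket 0 (2 * X 0 * X 1) (X 0 ^ 2)) M ↔
      ∃ ξ d : k, ξ ≠ 1 ∧ (∃ m, 0 < m ∧ ξ ^ m = 1) ∧ M = !![1, 0, 0; 0, ξ, 0; 0, d, 1]) :=
  stmt_4_general M hM
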